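/- Let f : ℕ → ℕ be monotone and additive (f(a + b) = f(a) + f(b) for all a, b, hence f(0) = 0). For any cost structure C over alphabets α, β with costs in ℕ, let f∘C denote the cost structure obtained by composing every insert, delete, and substitution cost of C with f. Then for all lists Q over α and R over β, the Levenshtein distance with costs f∘C equals f applied to the Levenshtein distance with costs C: levenshtein (f∘C) Q R = f (levenshtein C Q R). -/

import Mathlib

namespace Levenshtein

/-- A cost structure for edit distance (removed from Mathlib; restored with its old meaning). -/
structure Cost (α β δ : Type*) where
  delete : α → δ
  insert : β → δ
  substitute : α → β → δ

/-- Helper for `suffixLevenshtein` (as in the removed Mathlib file). -/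
def impl {α β δ : Type*} [AddZeroClass δ] [Min δ] (C : Cost α β δ)
    (xs : List α) (y : β) (d : {r : List δ // 0 < r.length}) : {r : List δ // 0 < r.length} :=
  let ⟨ds, w⟩ := d
  xs.zip (ds.zip ds.tail) |>.foldr
    (init := ⟨[C.insert y + ds.getLast (List.ne_nil_of_length_pos w)], by simp⟩)
    (fun ⟨x, d₀, d₁⟩ ⟨r, w⟩ =>
      ⟨min (C.delete x + r[0]) (min (C.insert y + d₀) (C.substitute x y + d₁)) :: r, by simp⟩)

end Levenshtein

/-- `suffixLevenshtein C xs ys` computes the Levenshtein distance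
(using the cost functions provided by `C`)
between each suffix of the list `xs` and the list `ys`. -/
def suffixLevenshtein {α β δ : Type*} [AddZeroClass δ] [Min δ] (C : Levenshtein.Cost α β δ)
    (xs : List α) (ys : List β) : {r : List δ // 0 < r.length} :=
  ys.foldr
    (Levenshtein.impl C xs)
    (xs.foldr (init := ⟨[0], by simp⟩) (fun a ⟨r, w⟩ => ⟨(C.delete a + r[0]) :: r, by simp⟩))

/-- `levenshtein C xs ys` computes the Levenshtein distance
(using the cost functions provided by `C`) between the lists `xs` and `ys`. -/
def levenshtein {α β δ : Type*} [AddZeroClass δ] [Min δ] (C : Levenshtein.Cost α β δ)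
    (xs : List α) (ys : List β) : δ :=
  let ⟨r, _⟩ := suffixLevenshtein C xs ys
  r[0]

/-- The cost structure obtained by composing every insert, delete, and substitution
cost of `C` with the function `f`. -/
def Levenshtein.Cost.comp {α β : Type*} (f : ℕ → ℕ) (C : Levenshtein.Cost α β ℕ) :
    Levenshtein.Cost α β ℕ where
  delete a := f (C.delete a)
  insert b := f (C.insert b)
  substitute a b := f (C.substitute a b)

/-!
Reading the dynamic programme off `suffixLevenshtein` gives the usual recursion
`d (x :: xs) (y :: ys) = min (del x + d xs (y :: ys)) (min (ins y + d (x :: xs) ys) (sub x y + d xs ys))`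
together with its boundary cases. A map preserving `0`, `+` and `min` commutes with every
right-hand side, so a double induction on the lists shows that it commutes with the distance;
on a linear order, monotone maps preserve `min`.
-/

theorem List.getElem_zero_cons_tail {γ : Type*} :
    ∀ (l : List γ) (h : 0 < l.length), l[0] :: l.tail = l
  | _ :: _, _ => rfl

namespace Levenshtein

variable {α β δ ε : Type*}

def Cost.map (f : δ → ε) (C : Cost α β δ) : Cost α β ε where
  delete a := f (C.delete a)
  insert b := f (C.insert b)
  substitute a b := f (C.substitute a b)

variable [AddZeroClass δ] [Min δ] (C : Cost α β δ)

theorem suffixLevenshtein_cons_right (xs : List α) (y : β) (ys : List β) :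
    suffixLevenshtein C xs (y :: ys) = impl C xs y (suffixLevenshtein C xs ys) := rfl

-- Splitting `ds` lets `ds.zip ds.tail` unfold, so both sides compute to the same list.
theorem impl_cons_val (x : α) (xs : List α) (y : β) (d : δ) (ds : List δ)
    (w : 0 < (d :: ds).length) (w' : 0 < ds.length) :
    (impl C (x :: xs) y ⟨d :: ds, w⟩).1 =
      min (C.delete x + (impl C xs y ⟨ds, w'⟩).1[0]'(impl C xs y ⟨ds, w'⟩).2)
        (min (C.insert y + d) (C.substitute x y + ds[0])) :: (impl C xs y ⟨ds, w'⟩).1 :=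
  match ds, w' with | _ :: _, _ => rfl

theorem suffixLevenshtein_cons_left_tail (x : α) (xs : List α) (ys : List β) :
    (suffixLevenshtein C (x :: xs) ys).1.tail = (suffixLevenshtein C xs ys).1 := by
  induction ys with
  | nil => rfl
  | cons y ys ih =>
    rw [suffixLevenshtein_cons_right, suffixLevenshtein_cons_right]
    set S := suffixLevenshtein C (x :: xs) ys
    set S' := suffixLevenshtein C xs ys
    have hS : S = ⟨S.1[0]'S.2 :: S'.1, by simp⟩ :=
      Subtype.ext (ih ▸ (List.getElem_zero_cons_tail ..).symm)
    rw [hS, impl_cons_val (w' := S'.2), List.tail_cons]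

theorem suffixLevenshtein_cons_left_val (x : α) (xs : List α) (ys : List β) :
    (suffixLevenshtein C (x :: xs) ys).1 =
      levenshtein C (x :: xs) ys :: (suffixLevenshtein C xs ys).1 := by
  rw [← suffixLevenshtein_cons_left_tail C x xs ys]
  exact (List.getElem_zero_cons_tail ..).symm

theorem suffixLevenshtein_nil_left_length (ys : List β) :
    (suffixLevenshtein C ([] : List α) ys).1.length = 1 := by
  cases ys <;> rfl

theorem levenshtein_nil_nil : levenshtein C ([] : List α) ([] : List β) = 0 := rfl

theorem levenshtein_cons_nil (x : α) (xs : List α) :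
    levenshtein C (x :: xs) ([] : List β) = C.delete x + levenshtein C xs [] := rfl

theorem levenshtein_nil_cons (y : β) (ys : List β) :
    levenshtein C ([] : List α) (y :: ys) = C.insert y + levenshtein C [] ys := by
  have hlen := suffixLevenshtein_nil_left_length C ys
  change C.insert y + (suffixLevenshtein C [] ys).1.getLast
    (List.ne_nil_of_length_pos (suffixLevenshtein C [] ys).2) = _
  rw [List.getLast_eq_getElem]
  simp only [hlen]
  rfl

theorem levenshtein_cons_cons (x : α) (xs : List α) (y : β) (ys : List β) :
    levenshtein C (x :: xs) (y :: ys) =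
      min (C.delete x + levenshtein C xs (y :: ys))
        (min (C.insert y + levenshtein C (x :: xs) ys) (C.substitute x y + levenshtein C xs ys)) := by
  have hS : suffixLevenshtein C (x :: xs) ys =
      ⟨levenshtein C (x :: xs) ys :: (suffixLevenshtein C xs ys).1, by simp⟩ :=
    Subtype.ext (suffixLevenshtein_cons_left_val C x xs ys)
  have h := suffixLevenshtein_cons_left_val C x xs (y :: ys)
  rw [suffixLevenshtein_cons_right, hS, impl_cons_val (w' := (suffixLevenshtein C xs ys).2)] at h
  exact (List.cons.inj h).1.symm

theorem levenshtein_map [AddZeroClass ε] [Min ε] (f : δ → ε) (map_zero : f 0 = 0)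
    (map_add : ∀ a b, f (a + b) = f a + f b) (map_min : ∀ a b, f (min a b) = min (f a) (f b))
    (xs : List α) (ys : List β) :
    levenshtein (C.map f) xs ys = f (levenshtein C xs ys) := by
  induction xs generalizing ys with
  | nil =>
    induction ys with
    | nil => rw [levenshtein_nil_nil, levenshtein_nil_nil, map_zero]
    | cons y ys ih => rw [levenshtein_nil_cons, levenshtein_nil_cons, ih, map_add]; rfl
  | cons x xs ihx =>
    induction ys with
    | nil => rw [levenshtein_cons_nil, levenshtein_cons_nil, ihx, map_add]; rfl
    | cons y ys ihy =>
      rw [levenshtein_cons_cons, levenshtein_cons_cons, ihx, ihx, ihy, map_min, map_min,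
        map_add, map_add, map_add]
      rfl

end Levenshtein

/-- **Monotone additive functions commute with the edit-distance recursion.**
If `f : ℕ → ℕ` is monotone and additive (`f (a + b) = f a + f b`, hence `f 0 = 0`),
then for every cost structure `C` and all lists `Q`, `R`, the Levenshtein distance
with costs `f ∘ C` equals `f` of the Levenshtein distance with costs `C`. -/
theorem levenshtein_comp (f : ℕ → ℕ) (hmono : Monotone f)
    (hadd : ∀ a b : ℕ, f (a + b) = f a + f b)
    {α β : Type*} (C : Levenshtein.Cost α β ℕ) (Q : List α) (R : List β) :
    levenshtein (Levenshtein.Cost.comp f C) Q R = f (levenshtein C Q R) :=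
  Levenshtein.levenshtein_map C f (by simpa using hadd 0 0) hadd (fun _ _ => hmono.map_min) Q R
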